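/- arXiv:1611.00410 — 5 statements merged into one kernel-verified Lean document; each statement's English description precedes it below -/
import Mathlib

section
/- In the symmetric group S_5, all factorizations of the 5-cycle g = (1 2 3 4 5) as a product x·y with x and y both 3-cycles form a single orbit under the diagonal conjugation action of the centralizer Z(g) = ⟨(1 2 3 4 5)⟩; this orbit consists of the five pairs obtained by conjugating ((1 2 3), (3 4 5)) by powers of g. -/
private def g5 : Equiv.Perm (Fin 5) := finRotate 5
private def x5 : Equiv.Perm (Fin 5) := Equiv.swap 0 1 * Equiv.swap 1 2
private def y5 : Equiv.Perm (Fin 5) := Equiv.swap 2 3 * Equiv.swap 3 4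

private lemma key (σ : Equiv.Perm (Fin 5)) : σ.cycleType = {3} ↔ σ ^ 3 = 1 ∧ σ ≠ 1 := by
  constructor
  · intro h
    have ho : orderOf σ = 3 := by
      have := σ.lcm_cycleType
      rw [h] at this
      simpa using this.symm
    refine ⟨?_, ?_⟩
    · rw [← ho]; exact pow_orderOf_eq_one σ
    · intro h1; rw [h1] at h; simp [Equiv.Perm.cycleType_one] at h
  · rintro ⟨h3, h1⟩
    have hd : orderOf σ ∣ 3 := orderOf_dvd_of_pow_eq_one h3
    have ho : orderOf σ = 3 := by
      rcases (Nat.prime_three).eq_one_or_self_of_dvd _ hd with h | h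
      · exact absurd (orderOf_eq_one_iff.mp h) h1
      · exact h
    have hall : ∀ n ∈ σ.cycleType, n = 3 := by
      intro n hn
      have h2 := Equiv.Perm.two_le_of_mem_cycleType hn
      have hdvd : n ∣ 3 := by
        have := Multiset.dvd_lcm hn
        rwa [σ.lcm_cycleType, ho] at this
      rcases (Nat.prime_three).eq_one_or_self_of_dvd _ hdvd with h | h <;> omega
    have hrep := Multiset.eq_replicate_of_mem hall
    have hsum : σ.cycleType.sum ≤ 5 := by
      rw [Equiv.Perm.sum_cycleType]
      simpa using σ.support.card_le_univ
    have hne : σ.cycleType ≠ 0 := by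
      simpa [Equiv.Perm.cycleType_eq_zero] using h1
    set n := Multiset.card σ.cycleType with hn
    have hle : n * 3 ≤ 5 := by
      rw [hrep, Multiset.sum_replicate, smul_eq_mul, mul_comm] at hsum; omega
    have hne0 : n ≠ 0 := by
      intro h; rw [h] at hrep; simp only [Multiset.replicate_zero] at hrep; exact hne hrep
    have h1' : n = 1 := by omega
    rw [hrep, h1']; rfl

set_option maxRecDepth 10000 in
private lemma enum : ∀ a : Equiv.Perm (Fin 5), a ^ 3 = 1 → a ≠ 1 → (a⁻¹ * g5) ^ 3 = 1 →
    a⁻¹ * g5 ≠ 1 →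
    (a = g5 ^ 0 * x5 * (g5 ^ 0)⁻¹ ∨ a = g5 ^ 1 * x5 * (g5 ^ 1)⁻¹ ∨
      a = g5 ^ 2 * x5 * (g5 ^ 2)⁻¹ ∨ a = g5 ^ 3 * x5 * (g5 ^ 3)⁻¹ ∨
      a = g5 ^ 4 * x5 * (g5 ^ 4)⁻¹) := by
  decide

private def F : Finset (Equiv.Perm (Fin 5) × Equiv.Perm (Fin 5)) :=
  {(g5 ^ 0 * x5 * (g5 ^ 0)⁻¹, g5 ^ 0 * y5 * (g5 ^ 0)⁻¹),
   (g5 ^ 1 * x5 * (g5 ^ 1)⁻¹, g5 ^ 1 * y5 * (g5 ^ 1)⁻¹),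
   (g5 ^ 2 * x5 * (g5 ^ 2)⁻¹, g5 ^ 2 * y5 * (g5 ^ 2)⁻¹),
   (g5 ^ 3 * x5 * (g5 ^ 3)⁻¹, g5 ^ 3 * y5 * (g5 ^ 3)⁻¹),
   (g5 ^ 4 * x5 * (g5 ^ 4)⁻¹, g5 ^ 4 * y5 * (g5 ^ 4)⁻¹)}

private lemma lemA :
    {p : Equiv.Perm (Fin 5) × Equiv.Perm (Fin 5) |
        p.1.cycleType = {3} ∧ p.2.cycleType = {3} ∧ p.1 * p.2 = g5} =
      {p | ∃ z ∈ Subgroup.zpowers g5, p = (z * x5 * z⁻¹, z * y5 * z⁻¹)} := by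
  ext p
  constructor
  · rintro ⟨h1, h2, h3⟩
    rw [key] at h1 h2
    have hy : p.2 = p.1⁻¹ * g5 := by rw [← h3]; group
    have h2' : (p.1⁻¹ * g5) ^ 3 = 1 := by rw [← hy]; exact h2.1
    have h2'' : p.1⁻¹ * g5 ≠ 1 := by rw [← hy]; exact h2.2
    rcases enum p.1 h1.1 h1.2 h2' h2'' with h | h | h | h | h
    · exact ⟨g5 ^ 0, Subgroup.pow_mem _ (Subgroup.mem_zpowers g5) 0,
        Prod.ext h (by rw [hy, h]; decide)⟩
    · exact ⟨g5 ^ 1, Subgroup.pow_mem _ (Subgroup.mem_zpowers g5) 1,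
        Prod.ext h (by rw [hy, h]; decide)⟩
    · exact ⟨g5 ^ 2, Subgroup.pow_mem _ (Subgroup.mem_zpowers g5) 2,
        Prod.ext h (by rw [hy, h]; decide)⟩
    · exact ⟨g5 ^ 3, Subgroup.pow_mem _ (Subgroup.mem_zpowers g5) 3,
        Prod.ext h (by rw [hy, h]; decide)⟩
    · exact ⟨g5 ^ 4, Subgroup.pow_mem _ (Subgroup.mem_zpowers g5) 4,
        Prod.ext h (by rw [hy, h]; decide)⟩
  · rintro ⟨z, hz, rfl⟩
    obtain ⟨k, rfl⟩ := Subgroup.mem_zpowers_iff.mp hz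
    have hc : g5 * g5 ^ k = g5 ^ k * g5 := (Commute.refl g5).zpow_right k
    refine ⟨?_, ?_, ?_⟩
    · show (g5 ^ k * x5 * (g5 ^ k)⁻¹).cycleType = {3}
      rw [Equiv.Perm.cycleType_conj, key]; exact ⟨by decide, by decide⟩
    · show (g5 ^ k * y5 * (g5 ^ k)⁻¹).cycleType = {3}
      rw [Equiv.Perm.cycleType_conj, key]; exact ⟨by decide, by decide⟩
    · show g5 ^ k * x5 * (g5 ^ k)⁻¹ * (g5 ^ k * y5 * (g5 ^ k)⁻¹) = g5
      have hxy : x5 * y5 = g5 := by decide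
      have : g5 ^ k * x5 * (g5 ^ k)⁻¹ * (g5 ^ k * y5 * (g5 ^ k)⁻¹) =
          g5 ^ k * (x5 * y5) * (g5 ^ k)⁻¹ := by group
      rw [this, hxy, ← hc]
      group

private lemma lemB :
    {p : Equiv.Perm (Fin 5) × Equiv.Perm (Fin 5) |
        ∃ z ∈ Subgroup.zpowers g5, p = (z * x5 * z⁻¹, z * y5 * z⁻¹)} = ↑F := by
  ext p
  constructor
  · rintro ⟨z, hz, rfl⟩
    obtain ⟨k, rfl⟩ := Subgroup.mem_zpowers_iff.mp hz
    have h5 : g5 ^ (5 : ℤ) = 1 := by decide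
    have hk : g5 ^ k = g5 ^ (k % 5) := by
      conv_lhs => rw [← Int.emod_add_mul_ediv k 5]
      rw [zpow_add, zpow_mul, h5, one_zpow, mul_one]
    have hm0 : 0 ≤ k % 5 := Int.emod_nonneg k (by norm_num)
    have hm5 : k % 5 < 5 := Int.emod_lt_of_pos k (by norm_num)
    rw [hk]
    set m := k % 5 with hm
    interval_cases m <;>
      simp only [F, Finset.coe_insert, Set.mem_insert_iff, Finset.coe_singleton,
        Set.mem_singleton_iff] <;> decide
  · intro hp
    simp only [F, Finset.coe_insert, Set.mem_insert_iff, Finset.coe_singleton,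
      Set.mem_singleton_iff] at hp
    rcases hp with h | h | h | h | h
    · exact ⟨g5 ^ 0, Subgroup.pow_mem _ (Subgroup.mem_zpowers g5) 0, h⟩
    · exact ⟨g5 ^ 1, Subgroup.pow_mem _ (Subgroup.mem_zpowers g5) 1, h⟩
    · exact ⟨g5 ^ 2, Subgroup.pow_mem _ (Subgroup.mem_zpowers g5) 2, h⟩
    · exact ⟨g5 ^ 3, Subgroup.pow_mem _ (Subgroup.mem_zpowers g5) 3, h⟩
    · exact ⟨g5 ^ 4, Subgroup.pow_mem _ (Subgroup.mem_zpowers g5) 4, h⟩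

/-- In `S₅`, all factorizations of the 5-cycle `g = (0 1 2 3 4)` as a product of
two 3-cycles form a single orbit (of size 5) under diagonal conjugation by the
centralizer `Z(g) = ⟨g⟩`, namely the orbit of `((0 1 2), (2 3 4))`. -/
theorem stmt5 :
    let g : Equiv.Perm (Fin 5) := finRotate 5
    -- the 3-cycle (0 1 2)
    let x : Equiv.Perm (Fin 5) := Equiv.swap 0 1 * Equiv.swap 1 2
    -- the 3-cycle (2 3 4)
    let y : Equiv.Perm (Fin 5) := Equiv.swap 2 3 * Equiv.swap 3 4
    let O : Set (Equiv.Perm (Fin 5) × Equiv.Perm (Fin 5)) :=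
      {p | ∃ z ∈ Subgroup.zpowers g, p = (z * x * z⁻¹, z * y * z⁻¹)}
    ({p : Equiv.Perm (Fin 5) × Equiv.Perm (Fin 5) |
        p.1.cycleType = {3} ∧ p.2.cycleType = {3} ∧ p.1 * p.2 = g} = O)
      ∧ O.ncard = 5 := by
  refine ⟨lemA, ?_⟩
  show Set.ncard {p : Equiv.Perm (Fin 5) × Equiv.Perm (Fin 5) |
      ∃ z ∈ Subgroup.zpowers g5, p = (z * x5 * z⁻¹, z * y5 * z⁻¹)} = 5
  rw [lemB, Set.ncard_coe_finset]
  decide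
end

section
/- Let S_n (n ≥ 4) act on V = ℂ^n by permuting coordinates. There is no nonzero skew-symmetric bilinear form β : V × V → ℂ supported as follows: β is invariant under the centralizer Z((1 2)(3 4)) in the sense that β(z·u, z·v) = β(u,v) for all z ∈ Z((1 2)(3 4)), β vanishes whenever one argument lies in the fixed space V^{(1 2)(3 4)}, and β restricted to the (-1)-eigenspace of (1 2)(3 4) is nonzero. (Equivalently, the space of such forms is zero.) -/
/-- The action of a permutation on `ℂ^n` by permuting coordinates. -/
noncomputable def permAct {n : ℕ} (σ : Equiv.Perm (Fin n)) (v : Fin n → ℂ) : Fin n → ℂ :=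
  fun i => v (σ⁻¹ i)

/-- The fixed point space of a set of permutations acting on `ℂ^n`. -/
noncomputable def fixedSpace {n : ℕ} (S : Set (Equiv.Perm (Fin n))) : Submodule ℂ (Fin n → ℂ) where
  carrier := {v | ∀ g ∈ S, ∀ i, v (g i) = v i}
  add_mem' := fun ha hb g hg i => by simp [ha g hg i, hb g hg i]
  zero_mem' := fun g hg i => rfl
  smul_mem' := fun c v hv g hg i => by simp [hv g hg i]

/-- For `g = (0 1)(2 3)` in `Sₙ` (n ≥ 4), there is no skew-symmetric bilinear
form on `ℂ^n` that is invariant under the centralizer `Z(g)`, vanishes whenever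
one argument lies in the fixed space `V^g`, and is nonzero on the
`(-1)`-eigenspace of `g`. -/
theorem stmt11 (n : ℕ) (hn : 4 ≤ n) :
    let i0 : Fin n := ⟨0, by omega⟩
    let i1 : Fin n := ⟨1, by omega⟩
    let i2 : Fin n := ⟨2, by omega⟩
    let i3 : Fin n := ⟨3, by omega⟩
    let g : Equiv.Perm (Fin n) := Equiv.swap i0 i1 * Equiv.swap i2 i3
    ¬ ∃ β : (Fin n → ℂ) →ₗ[ℂ] (Fin n → ℂ) →ₗ[ℂ] ℂ,
        (∀ u v, β u v = - β v u)
        ∧ (∀ z ∈ Subgroup.centralizer {g}, ∀ u v, β (permAct z u) (permAct z v) = β u v)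
        ∧ (∀ u ∈ fixedSpace {g}, ∀ v, β u v = 0 ∧ β v u = 0)
        ∧ (∃ u v : Fin n → ℂ, permAct g u = -u ∧ permAct g v = -v ∧ β u v ≠ 0) := by
  intro i0 i1 i2 i3 g
  rintro ⟨β, hskew, hinv, -, u, v, hu, hv, hβ⟩
  have h01 : i0 ≠ i1 := Fin.ne_of_val_ne (by norm_num)
  have h02 : i0 ≠ i2 := Fin.ne_of_val_ne (by norm_num)
  have h03 : i0 ≠ i3 := Fin.ne_of_val_ne (by norm_num)
  have h12 : i1 ≠ i2 := Fin.ne_of_val_ne (by norm_num)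
  have h13 : i1 ≠ i3 := Fin.ne_of_val_ne (by norm_num)
  have h23 : i2 ≠ i3 := Fin.ne_of_val_ne (by norm_num)
  have hcomm : Commute (Equiv.swap i0 i1) (Equiv.swap i2 i3) := by
    apply Equiv.Perm.Disjoint.commute
    intro x
    by_cases hx0 : x = i0
    · right; subst hx0; exact Equiv.swap_apply_of_ne_of_ne h02 h03
    by_cases hx1 : x = i1
    · right; subst hx1; exact Equiv.swap_apply_of_ne_of_ne h12 h13
    · left; exact Equiv.swap_apply_of_ne_of_ne hx0 hx1
  have hginv : g⁻¹ = g := by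
    show (Equiv.swap i0 i1 * Equiv.swap i2 i3)⁻¹ = _
    rw [mul_inv_rev, Equiv.swap_inv, Equiv.swap_inv, hcomm.symm.eq]
  -- action of g on indices
  have hg0 : g i0 = i1 := by
    show (Equiv.swap i0 i1) ((Equiv.swap i2 i3) i0) = i1
    rw [Equiv.swap_apply_of_ne_of_ne h02 h03, Equiv.swap_apply_left]
  have hg2 : g i2 = i3 := by
    show (Equiv.swap i0 i1) ((Equiv.swap i2 i3) i2) = i3
    rw [Equiv.swap_apply_left, Equiv.swap_apply_of_ne_of_ne (Ne.symm h03) (Ne.symm h13)]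
  have hgother : ∀ i : Fin n, i ≠ i0 → i ≠ i1 → i ≠ i2 → i ≠ i3 → g i = i := by
    intro i hi0 hi1 hi2 hi3
    show (Equiv.swap i0 i1) ((Equiv.swap i2 i3) i) = i
    rw [Equiv.swap_apply_of_ne_of_ne hi2 hi3, Equiv.swap_apply_of_ne_of_ne hi0 hi1]
  -- eigenvector equations
  have hu' : ∀ i, u (g⁻¹ i) = - u i := fun i => congrFun hu i
  have hv' : ∀ i, v (g⁻¹ i) = - v i := fun i => congrFun hv i
  have hu1 : u i1 = - u i0 := by have := hu' i0; rwa [hginv, hg0] at this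
  have hu3 : u i3 = - u i2 := by have := hu' i2; rwa [hginv, hg2] at this
  have hv1 : v i1 = - v i0 := by have := hv' i0; rwa [hginv, hg0] at this
  have hv3 : v i3 = - v i2 := by have := hv' i2; rwa [hginv, hg2] at this
  have huz : ∀ i : Fin n, i ≠ i0 → i ≠ i1 → i ≠ i2 → i ≠ i3 → u i = 0 := by
    intro i hi0 hi1 hi2 hi3
    have := hu' i
    rw [hginv, hgother i hi0 hi1 hi2 hi3] at this
    linear_combination this / 2
  have hvz : ∀ i : Fin n, i ≠ i0 → i ≠ i1 → i ≠ i2 → i ≠ i3 → v i = 0 := by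
    intro i hi0 hi1 hi2 hi3
    have := hv' i
    rw [hginv, hgother i hi0 hi1 hi2 hi3] at this
    linear_combination this / 2
  -- basis eigenvectors
  set a : Fin n → ℂ := fun i => if i = i0 then 1 else if i = i1 then -1 else 0 with ha_def
  set b : Fin n → ℂ := fun i => if i = i2 then 1 else if i = i3 then -1 else 0 with hb_def
  have hdec : ∀ (w : Fin n → ℂ), w i1 = -w i0 → w i3 = -w i2 →
      (∀ i : Fin n, i ≠ i0 → i ≠ i1 → i ≠ i2 → i ≠ i3 → w i = 0) →
      w = w i0 • a + w i2 • b := by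
    intro w hw1 hw3 hwz
    funext i
    by_cases hi0 : i = i0
    · subst hi0; simp [ha_def, hb_def, h01, h02, h03]
    by_cases hi1 : i = i1
    · subst hi1; simp [ha_def, hb_def, Ne.symm h01, h12, h13, hw1]
    by_cases hi2 : i = i2
    · subst hi2; simp [ha_def, hb_def, Ne.symm h02, Ne.symm h12, h23]
    by_cases hi3 : i = i3
    · subst hi3; simp [ha_def, hb_def, Ne.symm h03, Ne.symm h13, Ne.symm h23, hw3]
    · simp [ha_def, hb_def, hi0, hi1, hi2, hi3, hwz i hi0 hi1 hi2 hi3]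
  -- the swap (i0 i1) is in the centralizer
  have hz : Equiv.swap i0 i1 ∈ Subgroup.centralizer {g} := by
    rw [Subgroup.mem_centralizer_iff]
    rintro x rfl
    show (Equiv.swap i0 i1 * Equiv.swap i2 i3) * Equiv.swap i0 i1
        = Equiv.swap i0 i1 * (Equiv.swap i0 i1 * Equiv.swap i2 i3)
    rw [mul_assoc, hcomm.symm.eq]
  have hza : permAct (Equiv.swap i0 i1) a = -a := by
    funext i
    show a ((Equiv.swap i0 i1)⁻¹ i) = -(a i)
    rw [Equiv.swap_inv]
    by_cases hi0 : i = i0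
    · subst hi0; simp [ha_def, Equiv.swap_apply_left, h01, Ne.symm h01]
    by_cases hi1 : i = i1
    · subst hi1; simp [ha_def, Equiv.swap_apply_right, h01, Ne.symm h01]
    · rw [Equiv.swap_apply_of_ne_of_ne hi0 hi1]; simp [ha_def, hi0, hi1]
  have hzb : permAct (Equiv.swap i0 i1) b = b := by
    funext i
    show b ((Equiv.swap i0 i1)⁻¹ i) = b i
    rw [Equiv.swap_inv]
    by_cases hi0 : i = i0
    · subst hi0; simp [hb_def, Equiv.swap_apply_left, h02, h03, h12, h13]
    by_cases hi1 : i = i1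
    · subst hi1; simp [hb_def, Equiv.swap_apply_right, h02, h03, h12, h13]
    · rw [Equiv.swap_apply_of_ne_of_ne hi0 hi1]
  -- key vanishing
  have hab : β a b = 0 := by
    have h := hinv _ hz a b
    rw [hza, hzb, map_neg, LinearMap.neg_apply] at h
    linear_combination - h / 2
  have haa : β a a = 0 := by linear_combination (hskew a a) / 2
  have hbb : β b b = 0 := by linear_combination (hskew b b) / 2
  have hba : β b a = 0 := by rw [hskew b a, hab, neg_zero]
  apply hβ
  rw [hdec u hu1 hu3 huz, hdec v hv1 hv3 hvz]
  simp [map_add, map_smul, haa, hab, hba, hbb]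
end

section
/- Let S_n (n ≥ 3) act on V = ℂ^n by permuting the standard basis, and fix a, b ∈ ℂ. For each 3-cycle (i j k), define an alternating bilinear map κ_{(ijk)} : V × V → V by κ_{(ijk)}(e_i, e_j) = κ_{(ijk)}(e_j, e_k) = κ_{(ijk)}(e_k, e_i) = a(e_i + e_j + e_k) + b·Σ_{l ∉ {i,j,k}} e_l, and κ_{(ijk)}(e_l, e_m) = 0 whenever {l, m} ⊄ {i, j, k}. Then the image of κ_{(ijk)} is contained in the fixed space V^{(ijk)}, and the family is S_n-invariant: κ_{σ(ijk)σ⁻¹}(σ·u, σ·v) = σ·κ_{(ijk)}(u, v) for all σ ∈ S_n and u, v ∈ V. -/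
/-!
`κ_{(ijk)}(u, v)` is the scalar `c(u, v) = Σ_cyclic (u_i v_j - u_j v_i)` times the vector
`w_{ijk}` equal to `a` on `{i, j, k}` and to `b` off it. The 3-cycle `(i j k)` preserves
`{i, j, k}`, so it fixes `w_{ijk}`, and any `σ` carries `w_{ijk}` to `w_{σi σj σk}`; the
scalar `c` is invariant under rotating `(i, j, k)` and under relabelling vectors and indices
by the same `σ`. The values on basis pairs are then direct evaluations of `c`.
-/

section CyclicMinor

variable {α R : Type*} [CommRing R]

def cyclicMinor (u v : α → R) (i j k : α) : R :=
  u i * v j - u j * v i + u j * v k - u k * v j + u k * v i - u i * v k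

theorem cyclicMinor_rotate (u v : α → R) (i j k : α) :
    cyclicMinor u v j k i = cyclicMinor u v i j k := by
  unfold cyclicMinor; ring

theorem cyclicMinor_eq_zero_of_left {u : α → R} {i j k : α} (hi : u i = 0) (hj : u j = 0)
    (hk : u k = 0) (v : α → R) : cyclicMinor u v i j k = 0 := by
  simp [cyclicMinor, hi, hj, hk]

theorem cyclicMinor_eq_zero_of_right {v : α → R} {i j k : α} (hi : v i = 0) (hj : v j = 0)
    (hk : v k = 0) (u : α → R) : cyclicMinor u v i j k = 0 := by
  simp [cyclicMinor, hi, hj, hk]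

variable [DecidableEq α]

theorem cyclicMinor_single_single {i j k : α} (hij : i ≠ j) (hjk : j ≠ k) (hik : i ≠ k) :
    cyclicMinor (Pi.single i (1 : R)) (Pi.single j 1) i j k = 1 := by
  simp [cyclicMinor, hij, hik.symm, hjk.symm]

theorem cyclicMinor_single_single_eq_zero {i j k l m : α}
    (h : ¬ ({l, m} : Set α) ⊆ {i, j, k}) :
    cyclicMinor (Pi.single l (1 : R)) (Pi.single m 1) i j k = 0 := by
  simp only [Set.pair_subset_iff, Set.mem_insert_iff, Set.mem_singleton_iff, not_and_or,
    not_or] at h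
  rcases h with ⟨hi, hj, hk⟩ | ⟨hi, hj, hk⟩
  · exact cyclicMinor_eq_zero_of_left (Pi.single_eq_of_ne' hi 1) (Pi.single_eq_of_ne' hj 1)
      (Pi.single_eq_of_ne' hk 1) _
  · exact cyclicMinor_eq_zero_of_right (Pi.single_eq_of_ne' hi 1) (Pi.single_eq_of_ne' hj 1)
      (Pi.single_eq_of_ne' hk 1) _

end CyclicMinor

section TripleWeight

variable {α R : Type*} [DecidableEq α]

def tripleWeight (a b : R) (i j k : α) : α → R :=
  fun l => if l = i ∨ l = j ∨ l = k then a else b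

theorem tripleWeight_eq [Semiring R] [Fintype α] (a b : R) {i j k : α} (hij : i ≠ j)
    (hjk : j ≠ k) (hik : i ≠ k) :
    tripleWeight a b i j k = a • (Pi.single i 1 + Pi.single j 1 + Pi.single k 1)
      + b • ∑ l ∈ Finset.univ.filter (fun l => l ≠ i ∧ l ≠ j ∧ l ≠ k), Pi.single l 1 := by
  ext l
  by_cases hl : l = i ∨ l = j ∨ l = k
  · rcases hl with rfl | rfl | rfl <;>
      simp [tripleWeight, Finset.sum_apply, Pi.single_apply, *, hij.symm, hjk.symm, hik.symm]
  · simp only [not_or] at hl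
    simp [tripleWeight, Finset.sum_apply, Pi.single_apply, hl]

theorem tripleWeight_swap_mul_swap (a b : R) (i j k x : α) :
    tripleWeight a b i j k ((Equiv.swap i j * Equiv.swap j k) x) = tripleWeight a b i j k x := by
  simp only [tripleWeight, Equiv.Perm.mul_apply, Equiv.swap_apply_def]
  grind

end TripleWeight

section PermAct

variable {n : ℕ}

@[simp]
theorem permAct_apply_self (σ : Equiv.Perm (Fin n)) (u : Fin n → ℂ) (x : Fin n) :
    permAct σ u (σ x) = u x := by
  simp [permAct]

theorem permAct_smul (σ : Equiv.Perm (Fin n)) (c : ℂ) (u : Fin n → ℂ) :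
    permAct σ (c • u) = c • permAct σ u :=
  rfl

theorem cyclicMinor_permAct (σ : Equiv.Perm (Fin n)) (u v : Fin n → ℂ) (i j k : Fin n) :
    cyclicMinor (permAct σ u) (permAct σ v) (σ i) (σ j) (σ k) = cyclicMinor u v i j k := by
  simp [cyclicMinor]

theorem tripleWeight_perm (σ : Equiv.Perm (Fin n)) (a b : ℂ) (i j k : Fin n) :
    tripleWeight a b (σ i) (σ j) (σ k) = permAct σ (tripleWeight a b i j k) := by
  ext l
  simp only [tripleWeight, permAct, Equiv.Perm.inv_eq_iff_eq]

theorem tripleWeight_mem_fixedSpace (a b : ℂ) (i j k : Fin n) :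
    tripleWeight a b i j k ∈ fixedSpace {Equiv.swap i j * Equiv.swap j k} := by
  rintro g rfl x
  exact tripleWeight_swap_mul_swap a b i j k x

end PermAct

theorem stmt13_general (n : ℕ) (a b : ℂ) :
    let e : Fin n → (Fin n → ℂ) := fun i => Pi.single i 1
    -- a(e_i + e_j + e_k) + b Σ_{l ∉ {i,j,k}} e_l
    let w : Fin n → Fin n → Fin n → (Fin n → ℂ) :=
      fun i j k l => if l = i ∨ l = j ∨ l = k then a else b
    -- bilinear extension of the values on basis vectors
    let κ : Fin n → Fin n → Fin n → (Fin n → ℂ) → (Fin n → ℂ) → (Fin n → ℂ) :=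
      fun i j k u v =>
        (u i * v j - u j * v i + u j * v k - u k * v j + u k * v i - u i * v k) • w i j k
    -- the 3-cycle (i j k)
    let cyc : Fin n → Fin n → Fin n → Equiv.Perm (Fin n) :=
      fun i j k => Equiv.swap i j * Equiv.swap j k
    ∀ i j k : Fin n, i ≠ j → j ≠ k → i ≠ k →
      (κ i j k (e i) (e j) = a • (e i + e j + e k)
            + b • ∑ l ∈ Finset.univ.filter (fun l => l ≠ i ∧ l ≠ j ∧ l ≠ k), e l)
      ∧ κ i j k (e j) (e k) = κ i j k (e i) (e j)
      ∧ κ i j k (e k) (e i) = κ i j k (e i) (e j)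
      ∧ (∀ l m : Fin n, ¬ ({l, m} : Set (Fin n)) ⊆ {i, j, k} → κ i j k (e l) (e m) = 0)
      ∧ (∀ u v : Fin n → ℂ, κ i j k u v ∈ fixedSpace {cyc i j k})
      ∧ (∀ (σ : Equiv.Perm (Fin n)) (u v : Fin n → ℂ),
          κ (σ i) (σ j) (σ k) (permAct σ u) (permAct σ v) = permAct σ (κ i j k u v)) := by
  intro e w κ cyc i j k hij hjk hik
  have hκ : ∀ i j k u v, κ i j k u v = cyclicMinor u v i j k • tripleWeight a b i j k :=
    fun _ _ _ _ _ => rfl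
  have hκ_ij : κ i j k (e i) (e j) = tripleWeight a b i j k := by
    rw [hκ, cyclicMinor_single_single hij hjk hik, one_smul]
  refine ⟨hκ_ij.trans (tripleWeight_eq a b hij hjk hik), ?_, ?_, ?_, ?_, ?_⟩
  · rw [hκ_ij, hκ, ← cyclicMinor_rotate, cyclicMinor_single_single hjk hik.symm hij.symm,
      one_smul]
  · rw [hκ_ij, hκ, ← cyclicMinor_rotate, ← cyclicMinor_rotate,
      cyclicMinor_single_single hik.symm hij hjk.symm, one_smul]
  · intro l m hlm
    rw [hκ, cyclicMinor_single_single_eq_zero hlm, zero_smul]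
  · intro u v
    exact Submodule.smul_mem _ _ (tripleWeight_mem_fixedSpace a b i j k)
  · intro σ u v
    rw [hκ, hκ, cyclicMinor_permAct, tripleWeight_perm, permAct_smul]

/-- For each 3-cycle `(i j k)` in `Sₙ` (n ≥ 3), the alternating bilinear map
`κ_{(ijk)}` with `κ_{(ijk)}(e_i,e_j) = κ_{(ijk)}(e_j,e_k) = κ_{(ijk)}(e_k,e_i)
= a(e_i+e_j+e_k) + b·Σ_{l∉{i,j,k}} e_l` (and zero on other basis pairs) has image
in the fixed space `V^{(ijk)}` and the family is `Sₙ`-invariant. -/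
theorem stmt13 (n : ℕ) (hn : 3 ≤ n) (a b : ℂ) :
    let e : Fin n → (Fin n → ℂ) := fun i => Pi.single i 1
    -- a(e_i + e_j + e_k) + b Σ_{l ∉ {i,j,k}} e_l
    let w : Fin n → Fin n → Fin n → (Fin n → ℂ) :=
      fun i j k l => if l = i ∨ l = j ∨ l = k then a else b
    -- bilinear extension of the values on basis vectors
    let κ : Fin n → Fin n → Fin n → (Fin n → ℂ) → (Fin n → ℂ) → (Fin n → ℂ) :=
      fun i j k u v =>
        (u i * v j - u j * v i + u j * v k - u k * v j + u k * v i - u i * v k) • w i j k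
    -- the 3-cycle (i j k)
    let cyc : Fin n → Fin n → Fin n → Equiv.Perm (Fin n) :=
      fun i j k => Equiv.swap i j * Equiv.swap j k
    ∀ i j k : Fin n, i ≠ j → j ≠ k → i ≠ k →
      (κ i j k (e i) (e j) = a • (e i + e j + e k)
            + b • ∑ l ∈ Finset.univ.filter (fun l => l ≠ i ∧ l ≠ j ∧ l ≠ k), e l)
      ∧ κ i j k (e j) (e k) = κ i j k (e i) (e j)
      ∧ κ i j k (e k) (e i) = κ i j k (e i) (e j)
      ∧ (∀ l m : Fin n, ¬ ({l, m} : Set (Fin n)) ⊆ {i, j, k} → κ i j k (e l) (e m) = 0)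
      ∧ (∀ u v : Fin n → ℂ, κ i j k u v ∈ fixedSpace {cyc i j k})
      ∧ (∀ (σ : Equiv.Perm (Fin n)) (u v : Fin n → ℂ),
          κ (σ i) (σ j) (σ k) (permAct σ u) (permAct σ v) = permAct σ (κ i j k u v)) :=
  stmt13_general n a b
end

section
/- Let S_n (n ≥ 3) act on V = ℂ^n by permuting the standard basis, and fix a, b ∈ ℂ. Let κ_{(ijk)} be as in the definition of κ^L_∆ (κ_{(ijk)}(e_i,e_j)=κ_{(ijk)}(e_j,e_k)=κ_{(ijk)}(e_k,e_i)= a(e_i+e_j+e_k)+b Σ_{l∉{i,j,k}} e_l, and zero if either argument is a basis vector fixed by (i j k)). Then for every 3-cycle g = (i j k) and all u, v, w ∈ V, the cocycle condition κ_g(u,v)(g·w - w) + κ_g(v,w)(g·u - u) + κ_g(w,u)(g·v - v) = 0 holds in the symmetric algebra S(V). -/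
/-- The linear embedding of `ℂ^n` into the symmetric algebra
`S(V) = ℂ[e₀,…,e_{n-1}]`. -/
noncomputable def toPoly {n : ℕ} (v : Fin n → ℂ) : MvPolynomial (Fin n) ℂ :=
  ∑ l, MvPolynomial.C (v l) * MvPolynomial.X l

lemma toPoly_smul {n : ℕ} (c : ℂ) (v : Fin n → ℂ) :
    toPoly (c • v) = MvPolynomial.C c * toPoly v := by
  simp [toPoly, Finset.mul_sum, smul_eq_mul, map_mul, mul_assoc]

lemma toPoly_permAct_sub {n : ℕ} (i j k : Fin n) (hij : i ≠ j) (hjk : j ≠ k) (hik : i ≠ k)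
    (x : Fin n → ℂ) :
    toPoly (permAct (Equiv.swap i j * Equiv.swap j k) x) - toPoly x
      = MvPolynomial.C (x i) * (MvPolynomial.X j - MvPolynomial.X i)
        + MvPolynomial.C (x j) * (MvPolynomial.X k - MvPolynomial.X j)
        + MvPolynomial.C (x k) * (MvPolynomial.X i - MvPolynomial.X k) := by
  set σ := Equiv.swap i j * Equiv.swap j k with hσ
  have hσi : σ i = j := by
    simp [hσ, Equiv.swap_apply_of_ne_of_ne hij hik, Equiv.swap_apply_left]
  have hσj : σ j = k := by
    simp [hσ, Equiv.swap_apply_left, Equiv.swap_apply_of_ne_of_ne hik.symm hjk.symm]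
  have hσk : σ k = i := by
    simp [hσ, Equiv.swap_apply_right, Equiv.swap_apply_right]
  have hfix : ∀ l : Fin n, l ≠ i → l ≠ j → l ≠ k → σ l = l := by
    intro l hi hj hk
    simp [hσ, Equiv.swap_apply_of_ne_of_ne, hi, hj, hk]
  have h1 : toPoly (permAct σ x) = ∑ l, MvPolynomial.C (x l) * MvPolynomial.X (σ l) := by
    unfold toPoly permAct
    exact (Fintype.sum_equiv σ _ _ (fun l => by simp)).symm
  rw [h1]
  unfold toPoly
  rw [← Finset.sum_sub_distrib]
  have hmem : ({i, j, k} : Finset (Fin n)) ⊆ Finset.univ := Finset.subset_univ _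
  rw [← Finset.sum_subset hmem (fun l _ hl => by
    simp only [Finset.mem_insert, Finset.mem_singleton, not_or] at hl
    rw [hfix l hl.1 hl.2.1 hl.2.2]; ring)]
  rw [Finset.sum_insert (by simp [hij, hik]), Finset.sum_insert (by simp [hjk]),
    Finset.sum_singleton, hσi, hσj, hσk]
  ring

/-- For the maps `κ_{(ijk)}` of the definition of `κ^L_∆`, the cocycle condition
`κ_g(u,v)(g·w - w) + κ_g(v,w)(g·u - u) + κ_g(w,u)(g·v - v) = 0` holds in the
symmetric algebra for every 3-cycle `g = (i j k)`. -/
theorem stmt14 (n : ℕ) (hn : 3 ≤ n) (a b : ℂ) :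
    let w : Fin n → Fin n → Fin n → (Fin n → ℂ) :=
      fun i j k l => if l = i ∨ l = j ∨ l = k then a else b
    let κ : Fin n → Fin n → Fin n → (Fin n → ℂ) → (Fin n → ℂ) → (Fin n → ℂ) :=
      fun i j k u v =>
        (u i * v j - u j * v i + u j * v k - u k * v j + u k * v i - u i * v k) • w i j k
    let cyc : Fin n → Fin n → Fin n → Equiv.Perm (Fin n) :=
      fun i j k => Equiv.swap i j * Equiv.swap j k
    ∀ i j k : Fin n, i ≠ j → j ≠ k → i ≠ k →
      ∀ u v x : Fin n → ℂ,
        toPoly (κ i j k u v) * (toPoly (permAct (cyc i j k) x) - toPoly x)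
          + toPoly (κ i j k v x) * (toPoly (permAct (cyc i j k) u) - toPoly u)
          + toPoly (κ i j k x u) * (toPoly (permAct (cyc i j k) v) - toPoly v) = 0 := by
  intro w κ cyc i j k hij hjk hik u v x
  simp only [κ, cyc]
  rw [toPoly_smul, toPoly_smul, toPoly_smul,
    toPoly_permAct_sub i j k hij hjk hik x,
    toPoly_permAct_sub i j k hij hjk hik u,
    toPoly_permAct_sub i j k hij hjk hik v]
  simp only [map_add, map_sub, map_mul]
  ring
end

section
/- Let S_n (n ≥ 5) act on V = ℂ^n by permuting coordinates, and for a 5-cycle g define the skew-symmetric bilinear form κ^C_g on V by the matrix (a-b)²([g] - [g]ᵀ - 2[g²] + 2[g²]ᵀ), where [g] is the permutation matrix of g. Then κ^C_g vanishes whenever one argument lies in V^g, κ^C_g(e_i, g·e_i) = -(a-b)² and κ^C_g(e_i, g²·e_i) = 2(a-b)² for e_i ∉ V^g, and the family (κ^C_g) indexed by 5-cycles is S_n-invariant: κ^C_{hgh⁻¹}(h·u, h·v) = κ^C_g(u, v). -/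
open Equiv Function Matrix

theorem Equiv.Perm.pow_apply_ne_self_of_pow_prime_eq_one {α : Type*} {p : ℕ} (hp : p.Prime)
    {g : Perm α} (hg : g ^ p = 1) {x : α} (hx : g x ≠ x) {k : ℕ} (hk : ¬p ∣ k) :
    (g ^ k) x ≠ x := by
  have := Fact.mk hp
  have hper : IsPeriodicPt g p x := by
    simp [IsPeriodicPt, IsFixedPt, Perm.iterate_eq_pow, hg]
  have hmin : minimalPeriod g x = p := minimalPeriod_eq_prime hper hx
  intro hkx
  apply hk
  rw [← hmin]
  exact IsPeriodicPt.minimalPeriod_dvd (by simpa [IsPeriodicPt, IsFixedPt, Perm.iterate_eq_pow])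

theorem Matrix.sum_sum_mul_mul_eq_toLinearMap₂' {m n R : Type*} [Fintype m] [Fintype n]
    [DecidableEq m] [DecidableEq n] [CommSemiring R] (A : Matrix m n R) (u : m → R) (v : n → R) :
    ∑ i, ∑ j, u i * v j * A i j = toLinearMap₂' R A u v := by
  simp [toLinearMap₂'_apply, mul_assoc]

theorem Matrix.toLinearMap₂'_submatrix_equiv {l m n o R : Type*} [Fintype l] [Fintype m]
    [Fintype n] [Fintype o] [DecidableEq l] [DecidableEq m] [DecidableEq n] [DecidableEq o]
    [CommSemiring R] (A : Matrix m n R) (e₁ : l ≃ m) (e₂ : o ≃ n) (u : l → R) (v : o → R) :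
    toLinearMap₂' R (A.submatrix e₁ e₂) u v = toLinearMap₂' R A (u ∘ e₁.symm) (v ∘ e₂.symm) := by
  rw [toLinearMap₂'_apply', toLinearMap₂'_apply', submatrix_mulVec_equiv,
    comp_equiv_symm_dotProduct]

-- Needed because the vectors `Pi.single i 1` in `Matrix.toLinearMap₂'_single` elaborate over `ℕ`.
theorem Matrix.toLinearMap₂'_single_one {m n R : Type*} [Fintype m] [Fintype n] [DecidableEq m]
    [DecidableEq n] [CommSemiring R] (A : Matrix m n R) (i : m) (j : n) :
    toLinearMap₂' R A (Pi.single i (1 : R)) (Pi.single j (1 : R)) = A i j := by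
  simp [toLinearMap₂'_apply']

section kappa

variable {ι R : Type*} [DecidableEq ι] [CommRing R]

/-- The matrix of `κ^C_g` is `kappaMatrix ((a - b) ^ 2) g`. -/
def kappaMatrix (c : R) (g : Perm ι) : Matrix ι ι R :=
  of fun i j => c * ((if g j = i then 1 else 0) - (if g i = j then 1 else 0)
    - 2 * (if (g * g) j = i then 1 else 0) + 2 * (if (g * g) i = j then 1 else 0))

theorem kappaMatrix_transpose (c : R) (g : Perm ι) : (kappaMatrix c g)ᵀ = -kappaMatrix c g := by
  ext i j
  simp only [transpose_apply, kappaMatrix, Matrix.neg_apply, of_apply]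
  ring

theorem kappaMatrix_mulVec [Fintype ι] (c : R) (g : Perm ι) (v : ι → R) :
    kappaMatrix c g *ᵥ v =
      fun i => c * (v (g⁻¹ i) - v (g i) - 2 * v (g⁻¹ (g⁻¹ i)) + 2 * v (g (g i))) := by
  ext i
  simp only [mulVec, dotProduct, kappaMatrix, of_apply, Perm.mul_apply]
  simp only [← Perm.eq_inv_iff_eq (f := g) (y := i), ← Perm.eq_inv_iff_eq (f := g) (y := g⁻¹ i),
    eq_comm (a := g i), eq_comm (a := g (g i)), mul_sub, mul_add, sub_mul, add_mul, mul_ite,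
    ite_mul, mul_one, mul_zero, zero_mul, Finset.sum_sub_distrib, Finset.sum_add_distrib, Finset.sum_ite_eq',
    Finset.mem_univ, if_true]
  ring

theorem kappaMatrix_mulVec_eq_zero [Fintype ι] {g : Perm ι} {v : ι → R} (hv : ∀ i, v (g i) = v i)
    (c : R) :
    kappaMatrix c g *ᵥ v = 0 := by
  have hv' : ∀ i, v (g⁻¹ i) = v i := fun i => by simpa using (hv (g⁻¹ i)).symm
  ext i
  simp only [kappaMatrix_mulVec, hv, hv', Pi.zero_apply]
  ring

theorem vecMul_kappaMatrix_eq_zero [Fintype ι] {g : Perm ι} {v : ι → R} (hv : ∀ i, v (g i) = v i)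
    (c : R) :
    v ᵥ* kappaMatrix c g = 0 := by
  rw [← neg_neg (kappaMatrix c g), ← kappaMatrix_transpose, vecMul_neg, vecMul_transpose,
    kappaMatrix_mulVec_eq_zero hv, neg_zero]

theorem kappaMatrix_apply_apply_self {g : Perm ι} {i : ι} (h1 : g i ≠ i) (h2 : (g ^ 2) i ≠ i)
    (h3 : (g ^ 3) i ≠ i) (c : R) : kappaMatrix c g i (g i) = -c := by
  simp only [pow_succ, pow_zero, one_mul, Perm.mul_apply] at h2 h3
  simp [kappaMatrix, h1, h2, h3]

theorem kappaMatrix_apply_apply_apply_self {g : Perm ι} {i : ι} (h1 : g i ≠ i)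
    (h3 : (g ^ 3) i ≠ i) (h4 : (g ^ 4) i ≠ i) (c : R) :
    kappaMatrix c g i (g (g i)) = 2 * c := by
  simp only [pow_succ, pow_zero, one_mul, Perm.mul_apply] at h3 h4
  simp [kappaMatrix, h3, h4, Ne.symm h1, mul_comm]

theorem kappaMatrix_conj_submatrix (c : R) (g h : Perm ι) :
    (kappaMatrix c (h * g * h⁻¹)).submatrix h h = kappaMatrix c g := by
  ext i j
  simp only [kappaMatrix, submatrix_apply, of_apply, Perm.mul_apply, Perm.coe_inv, symm_apply_apply,
    EmbeddingLike.apply_eq_iff_eq]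
  rfl

end kappa

theorem stmt16_general (n : ℕ) (a b : ℂ) :
    -- matrix (a-b)^2([g] - [g]ᵀ - 2[g²] + 2[g²]ᵀ), where [g]_{ij} = 1 iff g j = i
    let M : Equiv.Perm (Fin n) → Fin n → Fin n → ℂ := fun g i j =>
      (a - b) ^ 2 * ((if g j = i then 1 else 0) - (if g i = j then 1 else 0)
        - 2 * (if (g * g) j = i then 1 else 0) + 2 * (if (g * g) i = j then 1 else 0))
    let κC : Equiv.Perm (Fin n) → (Fin n → ℂ) → (Fin n → ℂ) → ℂ := fun g u v =>
      ∑ i, ∑ j, u i * v j * M g i j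
    let e : Fin n → (Fin n → ℂ) := fun i => Pi.single i 1
    ∀ g : Equiv.Perm (Fin n), g.cycleType = {5} →
      (∀ v ∈ fixedSpace {g}, ∀ u : Fin n → ℂ, κC g v u = 0 ∧ κC g u v = 0)
        ∧ (∀ i : Fin n, g i ≠ i →
            κC g (e i) (e (g i)) = -(a - b) ^ 2
              ∧ κC g (e i) (e (g (g i))) = 2 * (a - b) ^ 2)
        ∧ (∀ (h : Equiv.Perm (Fin n)) (u v : Fin n → ℂ),
            κC (h * g * h⁻¹) (permAct h u) (permAct h v) = κC g u v) := by
  intro M κC e g hg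
  have hκ : ∀ g u v, κC g u v = toLinearMap₂' ℂ (kappaMatrix ((a - b) ^ 2) g) u v :=
    fun g => sum_sum_mul_mul_eq_toLinearMap₂' _
  have hg5 : g ^ 5 = 1 := by
    rw [← pow_orderOf_eq_one g, ← Perm.lcm_cycleType, hg, Multiset.lcm_singleton, normalize_eq]
  simp only [hκ, e]
  refine ⟨fun v hv u => ?_, fun i hi => ?_, fun h u v => ?_⟩
  · have hv : ∀ i, v (g i) = v i := hv g rfl
    rw [toLinearMap₂'_apply', toLinearMap₂'_apply', dotProduct_mulVec,
      vecMul_kappaMatrix_eq_zero hv, kappaMatrix_mulVec_eq_zero hv, zero_dotProduct,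
      dotProduct_zero]
    exact ⟨rfl, rfl⟩
  · have hpow : ∀ k, ¬5 ∣ k → (g ^ k) i ≠ i := fun k hk =>
      Perm.pow_apply_ne_self_of_pow_prime_eq_one Nat.prime_five hg5 hi hk
    rw [toLinearMap₂'_single_one, toLinearMap₂'_single_one,
      kappaMatrix_apply_apply_self hi (hpow 2 (by norm_num)) (hpow 3 (by norm_num)),
      kappaMatrix_apply_apply_apply_self hi (hpow 3 (by norm_num)) (hpow 4 (by norm_num))]
    exact ⟨rfl, rfl⟩
  · rw [← kappaMatrix_conj_submatrix _ g h, toLinearMap₂'_submatrix_equiv]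
    rfl

/-- For a 5-cycle `g` in `Sₙ` (n ≥ 5), the skew-symmetric bilinear form with
matrix `(a-b)²([g] - [g]ᵀ - 2[g²] + 2[g²]ᵀ)` vanishes when an argument lies in
`V^g`, satisfies `κ^C_g(e_i, g·e_i) = -(a-b)²` and `κ^C_g(e_i, g²·e_i) = 2(a-b)²`
for `e_i ∉ V^g`, and the family indexed by 5-cycles is `Sₙ`-invariant. -/
theorem stmt16 (n : ℕ) (hn : 5 ≤ n) (a b : ℂ) :
    -- matrix (a-b)^2([g] - [g]ᵀ - 2[g²] + 2[g²]ᵀ), where [g]_{ij} = 1 iff g j = i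
    let M : Equiv.Perm (Fin n) → Fin n → Fin n → ℂ := fun g i j =>
      (a - b) ^ 2 * ((if g j = i then 1 else 0) - (if g i = j then 1 else 0)
        - 2 * (if (g * g) j = i then 1 else 0) + 2 * (if (g * g) i = j then 1 else 0))
    let κC : Equiv.Perm (Fin n) → (Fin n → ℂ) → (Fin n → ℂ) → ℂ := fun g u v =>
      ∑ i, ∑ j, u i * v j * M g i j
    let e : Fin n → (Fin n → ℂ) := fun i => Pi.single i 1
    ∀ g : Equiv.Perm (Fin n), g.cycleType = {5} →
      (∀ v ∈ fixedSpace {g}, ∀ u : Fin n → ℂ, κC g v u = 0 ∧ κC g u v = 0)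
        ∧ (∀ i : Fin n, g i ≠ i →
            κC g (e i) (e (g i)) = -(a - b) ^ 2
              ∧ κC g (e i) (e (g (g i))) = 2 * (a - b) ^ 2)
        ∧ (∀ (h : Equiv.Perm (Fin n)) (u v : Fin n → ℂ),
            κC (h * g * h⁻¹) (permAct h u) (permAct h v) = κC g u v) :=
  stmt16_general n a b
end
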